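/- Let (M,d) be a compact metric space, E : M → ℝ continuous, h > 0, and χ⁰ ∈ M. Let χ : ℕ → M satisfy χ(0) = χ⁰ and, for every n ≥ 1, χ(n) minimizes u ↦ d²(u, χ(n−1))/(2h) + E(u) over M. Let u : (0,∞) → M be a variational interpolation, i.e. for every n ≥ 1 and every t ∈ ((n−1)h, nh], u(t) minimizes v ↦ d²(v, χ(n−1))/(2(t−(n−1)h)) + E(v) over M, with u(nh) = χ(n). Then for every N ∈ ℕ: E(χ(N)) + (1/2)·Σ_{n=1}^{N} d²(χ(n), χ(n−1))/h + (1/2)·∫_0^{Nh} |∂E|(u(s))² ds ≤ E(χ⁰), where the integral is the Lebesgue integral with values in [0,∞]. -/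

import Mathlib

open MeasureTheory Filter Topology
open scoped ENNReal

/-- The metric slope `|∂E|(u)`: the limsup, as `v → u` with `v ≠ u`, of
`max (E u - E v) 0 / dist v u`, valued in `[0,∞]`. -/
noncomputable def metricSlope {M : Type*} [PseudoMetricSpace M] (E : M → ℝ) (u : M) : ℝ≥0∞ :=
  Filter.limsup (fun v => ENNReal.ofReal (max (E u - E v) 0 / dist v u)) (𝓝[≠] u)

/-
Fix one step, with previous point `x`, and let `w τ` minimize
`Φ_τ v = d(v, x)² / (2τ) + E v` for `τ ∈ (0, h]`, with minimal value `φ τ`.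
Comparing `w τ` with nearby points gives `|∂E|(w τ) ≤ d(w τ, x) / τ`; comparing the
minimality at two times `s < t` shows that `τ ↦ d(w τ, x)` is nondecreasing and that
`φ t + d(w s, x)² (t - s) / (2 s t) ≤ φ s`. On the geometric cells `(h / r^(i+1), h / r^i]`
these facts bound the integral of `|∂E|²(w τ)` over each cell by `2 r²` times the decrease of
`φ` on the neighbouring cell, so summing the telescoping series gives
`∫_0^h |∂E|²(w τ) dτ ≤ d(w h, x)² r (r - 1) / h + 2 r² (E x - φ h)`; let `r ↓ 1`.
Only upper bounds on the integrand are used, so no measurability of `τ ↦ |∂E|(w τ)` is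
needed. Summing over the steps, the values `E (χ n)` telescope.
-/

theorem Set.Ioc_zero_subset_iUnion_Ioc_div_pow {h r : ℝ} (hr : 1 < r) :
    Set.Ioc 0 h ⊆ ⋃ i : ℕ, Set.Ioc (h / r ^ (i + 1)) (h / r ^ i) := by
  rintro τ ⟨hτ, hτh⟩
  obtain ⟨n, hn, hn'⟩ := exists_nat_pow_near ((one_le_div hτ).2 hτh) hr
  have hrn : ∀ k, 0 < r ^ k := fun k => pow_pos (zero_lt_one.trans hr) k
  refine Set.mem_iUnion.2 ⟨n, ?_, ?_⟩
  · rw [div_lt_iff₀ (hrn _)]; rwa [div_lt_iff₀ hτ, mul_comm] at hn'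
  · rw [le_div_iff₀ (hrn _)]; rwa [le_div_iff₀ hτ, mul_comm] at hn

theorem ENNReal.tsum_ofReal_sub_le {f : ℕ → ℝ} (hf : Monotone f) {b : ℝ}
    (hb : ∀ n, f n ≤ b) :
    ∑' i, ENNReal.ofReal (f (i + 1) - f i) ≤ ENNReal.ofReal (b - f 0) := by
  refine ENNReal.tsum_le_of_sum_range_le fun n => ?_
  rw [← ENNReal.ofReal_sum_of_nonneg fun i _ => sub_nonneg.2 (hf i.le_succ),
    Finset.sum_range_sub (fun i => f i)]
  exact ENNReal.ofReal_le_ofReal (by linarith [hb n])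

theorem MeasureTheory.lintegral_Ioc_add_left (f : ℝ → ℝ≥0∞) (c a b : ℝ) :
    ∫⁻ s in Set.Ioc (c + a) (c + b), f s = ∫⁻ τ in Set.Ioc a b, f (c + τ) := by
  rw [(measurePreserving_add_left volume c).setLIntegral_comp_emb
    (Homeomorph.addLeft c).measurableEmbedding f (Set.Ioc a b), Set.image_const_add_Ioc]

theorem MeasureTheory.lintegral_Ioc_le_sum (f : ℝ → ℝ≥0∞) (a : ℕ → ℝ) (N : ℕ) :
    ∫⁻ s in Set.Ioc (a 0) (a N), f s ≤
      ∑ k ∈ Finset.range N, ∫⁻ s in Set.Ioc (a k) (a (k + 1)), f s := by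
  induction N with
  | zero => simp
  | succ N ih =>
    rw [Finset.sum_range_succ]
    exact (lintegral_mono_set Set.Ioc_subset_Ioc_union_Ioc).trans <|
      (lintegral_union_le _ _ _).trans (add_le_add_left ih _)

theorem EReal.coe_add_half_mul_le {a b : ℝ} {I : ℝ≥0∞} (hab : a ≤ b)
    (hI : I ≤ ENNReal.ofReal (2 * (b - a))) :
    (a : EReal) + ((1 / 2 : ℝ) : EReal) * (I : EReal) ≤ b := by
  have hItop : I ≠ ⊤ := ne_top_of_le_ne_top ENNReal.ofReal_ne_top hI
  have hIle : I.toReal ≤ 2 * (b - a) := ENNReal.toReal_le_of_le_ofReal (by linarith) hI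
  rw [← EReal.coe_ennreal_toReal hItop, ← EReal.coe_mul, ← EReal.coe_add,
    EReal.coe_le_coe_iff]
  linarith

noncomputable def proxObjective {M : Type*} [PseudoMetricSpace M] (E : M → ℝ) (τ : ℝ)
    (x v : M) : ℝ :=
  dist v x ^ 2 / (2 * τ) + E v

def IsProxPoint {M : Type*} [PseudoMetricSpace M] (E : M → ℝ) (τ : ℝ) (x w : M) : Prop :=
  ∀ v, proxObjective E τ x w ≤ proxObjective E τ x v

namespace IsProxPoint

variable {M : Type*} [PseudoMetricSpace M] {E : M → ℝ} {τ s t : ℝ} {x w ws wt : M}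

theorem proxObjective_le (hw : IsProxPoint E τ x w) : proxObjective E τ x w ≤ E x := by
  simpa [proxObjective] using hw x

theorem proxObjective_add_le (hs : s ≠ 0) (ht : t ≠ 0) (hwt : IsProxPoint E t x wt) (ws : M) :
    proxObjective E t x wt + dist ws x ^ 2 * (t - s) / (2 * s * t) ≤ proxObjective E s x ws := by
  have hshift : proxObjective E t x ws + dist ws x ^ 2 * (t - s) / (2 * s * t) =
      proxObjective E s x ws := by
    unfold proxObjective; field_simp; ring
  linarith [hwt ws]

theorem dist_le_dist_of_lt (hws : IsProxPoint E s x ws) (hwt : IsProxPoint E t x wt)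
    (hs : 0 < s) (hst : s < t) : dist ws x ≤ dist wt x := by
  have ht : 0 < t := hs.trans hst
  set A := (t - s) / (2 * s * t)
  have hA : 0 < A := by have := sub_pos.2 hst; positivity
  have h₁ := hwt.proxObjective_add_le hs.ne' ht.ne' ws
  have h₂ := hws.proxObjective_add_le ht.ne' hs.ne' wt
  have e₁ : dist ws x ^ 2 * (t - s) / (2 * s * t) = dist ws x ^ 2 * A := mul_div_assoc _ _ _
  have e₂ : dist wt x ^ 2 * (s - t) / (2 * t * s) = -(dist wt x ^ 2 * A) := by
    simp only [A]; field_simp; ring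
  have hsq : dist ws x ^ 2 * A ≤ dist wt x ^ 2 * A := by linarith
  exact (pow_le_pow_iff_left₀ dist_nonneg dist_nonneg two_ne_zero).1
    (le_of_mul_le_mul_right hsq hA)

theorem metricSlope_le (hτ : 0 < τ) (hw : IsProxPoint E τ x w) :
    metricSlope E w ≤ ENNReal.ofReal (dist w x / τ) := by
  set g : M → ℝ≥0∞ := fun v => ENNReal.ofReal ((dist v x + dist w x) / (2 * τ))
  have hquot : ∀ v, ENNReal.ofReal (max (E w - E v) 0 / dist v w) ≤ g v := by
    intro v
    refine ENNReal.ofReal_le_ofReal (div_le_of_le_mul₀ dist_nonneg (by positivity) ?_)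
    have hE : E w - E v ≤ (dist v x ^ 2 - dist w x ^ 2) / (2 * τ) := by
      have := hw v; unfold proxObjective at this; rw [sub_div]; linarith
    have hsq : dist v x ^ 2 - dist w x ^ 2 ≤ (dist v x + dist w x) * dist v w := by
      nlinarith [dist_triangle v w x, dist_nonneg (x := v) (y := x), dist_nonneg (x := w) (y := x)]
    refine max_le (hE.trans ?_) (by positivity)
    rw [div_mul_eq_mul_div]
    gcongr
  have hg : Tendsto g (𝓝 w) (𝓝 (ENNReal.ofReal (dist w x / τ))) := by
    have : (dist w x + dist w x) / (2 * τ) = dist w x / τ := by field_simp; ring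
    rw [← this]
    exact ((ENNReal.continuous_ofReal.comp (by fun_prop)).tendsto w)
  calc metricSlope E w ≤ limsup g (𝓝[≠] w) := limsup_le_limsup (Eventually.of_forall hquot)
    _ ≤ limsup g (𝓝 w) := limsup_le_limsup_of_le nhdsWithin_le_nhds
    _ = ENNReal.ofReal (dist w x / τ) := hg.limsup_eq

end IsProxPoint

section ProxPath

variable {M : Type*} [PseudoMetricSpace M] {E : M → ℝ} {x : M} {w : ℝ → M} {h : ℝ}

theorem monotoneOn_dist_of_isProxPoint (hw : ∀ τ ∈ Set.Ioc 0 h, IsProxPoint E τ x (w τ)) :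
    MonotoneOn (fun τ => dist (w τ) x) (Set.Ioc 0 h) := by
  intro s hs t ht hst
  rcases hst.eq_or_lt with rfl | hlt
  · exact le_rfl
  · exact (hw s hs).dist_le_dist_of_lt (hw t ht) hs.1 hlt

theorem antitoneOn_proxObjective_of_isProxPoint
    (hw : ∀ τ ∈ Set.Ioc 0 h, IsProxPoint E τ x (w τ)) :
    AntitoneOn (fun τ => proxObjective E τ x (w τ)) (Set.Ioc 0 h) := by
  intro s hs t ht hst
  have hdecay := (hw t ht).proxObjective_add_le hs.1.ne' ht.1.ne' (w s)
  have : 0 ≤ dist (w s) x ^ 2 * (t - s) / (2 * s * t) := by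
    have := hs.1; have := ht.1; have := sub_nonneg.2 hst; positivity
  linarith

theorem lintegral_metricSlope_sq_Ioc_le (hw : ∀ τ ∈ Set.Ioc 0 h, IsProxPoint E τ x (w τ))
    {s t : ℝ} (hs : 0 < s) (ht : t ≤ h) :
    ∫⁻ τ in Set.Ioc s t, metricSlope E (w τ) ^ 2 ≤
      ENNReal.ofReal (dist (w t) x ^ 2 / s ^ 2 * (t - s)) := by
  have hbound : ∀ τ ∈ Set.Ioc s t,
      metricSlope E (w τ) ^ 2 ≤ ENNReal.ofReal (dist (w t) x ^ 2 / s ^ 2) := by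
    rintro τ ⟨hsτ, hτt⟩
    have hτ : 0 < τ := hs.trans hsτ
    calc metricSlope E (w τ) ^ 2 ≤ ENNReal.ofReal (dist (w τ) x / τ) ^ 2 :=
          pow_le_pow_left' ((hw τ ⟨hτ, hτt.trans ht⟩).metricSlope_le hτ) 2
      _ = ENNReal.ofReal (dist (w τ) x ^ 2 / τ ^ 2) := by
          rw [← ENNReal.ofReal_pow (by positivity), div_pow]
      _ ≤ ENNReal.ofReal (dist (w t) x ^ 2 / s ^ 2) := by
          gcongr
          exact
            monotoneOn_dist_of_isProxPoint hw ⟨hτ, hτt.trans ht⟩ ⟨hτ.trans_le hτt, ht⟩ hτt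
  calc ∫⁻ τ in Set.Ioc s t, metricSlope E (w τ) ^ 2
      ≤ ∫⁻ _ in Set.Ioc s t, ENNReal.ofReal (dist (w t) x ^ 2 / s ^ 2) :=
        setLIntegral_mono measurable_const hbound
    _ = ENNReal.ofReal (dist (w t) x ^ 2 / s ^ 2 * (t - s)) := by
        rw [setLIntegral_const, Real.volume_Ioc, ← ENNReal.ofReal_mul (by positivity)]

/-- The cell `(t/r², t/r]` is controlled through the distance at its right end `t/r`, which is
also the distance governing the decrease of the prox value on the next cell `(t/r, t]`. -/
theorem lintegral_metricSlope_sq_Ioc_div_le (hw : ∀ τ ∈ Set.Ioc 0 h, IsProxPoint E τ x (w τ))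
    {r t : ℝ} (hr : 1 < r) (ht : 0 < t) (hth : t ≤ h) :
    ∫⁻ τ in Set.Ioc (t / r / r) (t / r), metricSlope E (w τ) ^ 2 ≤
      ENNReal.ofReal (2 * r ^ 2 *
        (proxObjective E (t / r) x (w (t / r)) - proxObjective E t x (w t))) := by
  have hr₀ : 0 < r := zero_lt_one.trans hr
  have htr : t / r ≤ t := div_le_self ht.le hr.le
  refine (lintegral_metricSlope_sq_Ioc_le hw (by positivity) (htr.trans hth)).trans
    (ENNReal.ofReal_le_ofReal ?_)
  have hdecay :=
    (hw t ⟨ht, hth⟩).proxObjective_add_le (s := t / r) (by positivity) ht.ne' (w (t / r))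
  have hpiece : dist (w (t / r)) x ^ 2 / (t / r / r) ^ 2 * (t / r - t / r / r) =
      2 * r ^ 2 * (dist (w (t / r)) x ^ 2 * (t - t / r) / (2 * (t / r) * t)) := by
    field_simp
  rw [hpiece]
  gcongr
  linarith

theorem lintegral_metricSlope_sq_le_of_one_lt
    (hw : ∀ τ ∈ Set.Ioc 0 h, IsProxPoint E τ x (w τ)) (hh : 0 < h) {r : ℝ} (hr : 1 < r) :
    ∫⁻ τ in Set.Ioc 0 h, metricSlope E (w τ) ^ 2 ≤
      ENNReal.ofReal (dist (w h) x ^ 2 * r * (r - 1) / h +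
        2 * r ^ 2 * (E x - proxObjective E h x (w h))) := by
  have hr₀ : 0 < r := zero_lt_one.trans hr
  set a : ℕ → ℝ := fun i => h / r ^ i with ha
  have ha_succ : ∀ i, a (i + 1) = a i / r := fun i => by simp only [ha, pow_succ, div_div]
  have ha_pos : ∀ i, 0 < a i := fun i => by positivity
  have ha_le : ∀ i, a i ≤ h := fun i => div_le_self hh.le (one_le_pow₀ hr.le)
  have ha_mem : ∀ i, a i ∈ Set.Ioc 0 h := fun i => ⟨ha_pos i, ha_le i⟩
  have hwa : ∀ i, IsProxPoint E (a i) x (w (a i)) := fun i => hw _ (ha_mem i)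
  set φ : ℕ → ℝ := fun i => proxObjective E (a i) x (w (a i))
  have hφ_mono : Monotone φ := fun i j hij =>
    antitoneOn_proxObjective_of_isProxPoint hw (ha_mem j) (ha_mem i)
      (div_le_div_of_nonneg_left hh.le (by positivity) (pow_le_pow_right₀ hr.le hij))
  set F : ℕ → ℝ≥0∞ := fun i => ∫⁻ τ in Set.Ioc (a (i + 1)) (a i), metricSlope E (w τ) ^ 2
  have hF_zero : F 0 ≤ ENNReal.ofReal (dist (w h) x ^ 2 * r * (r - 1) / h) := by
    refine (lintegral_metricSlope_sq_Ioc_le hw (ha_pos 1) (ha_le 0)).trans_eq ?_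
    simp only [ha, pow_zero, pow_one, div_one]
    congr 1
    field_simp
  have hF_succ : ∀ i,
      F (i + 1) ≤ ENNReal.ofReal (2 * r ^ 2) * ENNReal.ofReal (φ (i + 1) - φ i) := by
    intro i
    rw [← ENNReal.ofReal_mul (by positivity)]
    simpa only [F, φ, ha_succ] using
      lintegral_metricSlope_sq_Ioc_div_le hw hr (ha_pos i) (ha_le i)
  calc ∫⁻ τ in Set.Ioc 0 h, metricSlope E (w τ) ^ 2 ≤ ∑' i, F i :=
        (lintegral_mono_set (Set.Ioc_zero_subset_iUnion_Ioc_div_pow hr)).trans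
          (lintegral_iUnion_le _ _)
    _ = F 0 + ∑' i, F (i + 1) := tsum_eq_zero_add' ENNReal.summable
    _ ≤ ENNReal.ofReal (dist (w h) x ^ 2 * r * (r - 1) / h) +
          ENNReal.ofReal (2 * r ^ 2) * ∑' i, ENNReal.ofReal (φ (i + 1) - φ i) := by
        rw [← ENNReal.tsum_mul_left]
        exact add_le_add hF_zero (ENNReal.tsum_le_tsum hF_succ)
    _ ≤ ENNReal.ofReal (dist (w h) x ^ 2 * r * (r - 1) / h) +
          ENNReal.ofReal (2 * r ^ 2) * ENNReal.ofReal (E x - φ 0) := by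
        gcongr
        exact ENNReal.tsum_ofReal_sub_le hφ_mono fun i => (hwa i).proxObjective_le
    _ = _ := by
        have : 0 ≤ E x - φ 0 := sub_nonneg.2 (hwa 0).proxObjective_le
        rw [← ENNReal.ofReal_mul (by positivity), ← ENNReal.ofReal_add (by positivity)
          (by positivity)]
        simp only [φ, ha, pow_zero, div_one]

theorem lintegral_metricSlope_sq_le (hw : ∀ τ ∈ Set.Ioc 0 h, IsProxPoint E τ x (w τ))
    (hh : 0 < h) :
    ∫⁻ τ in Set.Ioc 0 h, metricSlope E (w τ) ^ 2 ≤
      ENNReal.ofReal (2 * (E x - proxObjective E h x (w h))) := by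
  set c := E x - proxObjective E h x (w h)
  set g : ℝ → ℝ≥0∞ :=
    fun r => ENNReal.ofReal (dist (w h) x ^ 2 * r * (r - 1) / h + 2 * r ^ 2 * c)
  have hg_one : g 1 = ENNReal.ofReal (2 * c) := by norm_num [g]
  have hlim : Tendsto g (𝓝[>] 1) (𝓝 (ENNReal.ofReal (2 * c))) :=
    hg_one ▸ ((ENNReal.continuous_ofReal.comp (by fun_prop)).tendsto 1).mono_left
      nhdsWithin_le_nhds
  exact ge_of_tendsto hlim (eventually_nhdsWithin_of_forall fun r hr =>
    lintegral_metricSlope_sq_le_of_one_lt hw hh hr)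

end ProxPath

theorem sum_range_sub_proxObjective {M : Type*} [PseudoMetricSpace M] (E : M → ℝ) (h : ℝ)
    (χ : ℕ → M) (N : ℕ) :
    ∑ k ∈ Finset.range N, (E (χ k) - proxObjective E h (χ k) (χ (k + 1))) =
      E (χ 0) - (E (χ N) + 1 / 2 * ∑ n ∈ Finset.Icc 1 N, dist (χ n) (χ (n - 1)) ^ 2 / h) := by
  have hIcc : ∑ n ∈ Finset.Icc 1 N, dist (χ n) (χ (n - 1)) ^ 2 / h =
      ∑ k ∈ Finset.range N, dist (χ (k + 1)) (χ k) ^ 2 / h := by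
    rw [Finset.range_eq_Ico]
    exact (Finset.sum_Ico_add' (fun n => dist (χ n) (χ (n - 1)) ^ 2 / h) 0 N 1).symm
  have hsplit : ∀ k, E (χ k) - proxObjective E h (χ k) (χ (k + 1)) =
      (E (χ k) - E (χ (k + 1))) - 1 / 2 * (dist (χ (k + 1)) (χ k) ^ 2 / h) := fun k => by
    simp only [proxObjective]; ring
  rw [hIcc, Finset.sum_congr rfl fun k _ => hsplit k, Finset.sum_sub_distrib,
    Finset.sum_range_sub' (fun k => E (χ k)), ← Finset.mul_sum]
  ring

section MinimizingMovement

variable {M : Type*} [PseudoMetricSpace M] {E : M → ℝ} {h : ℝ}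

theorem lintegral_metricSlope_sq_Ioc_add_le {x : M} {u : ℝ → M} {t₀ : ℝ} (hh : 0 < h)
    (hu : ∀ τ ∈ Set.Ioc 0 h, IsProxPoint E τ x (u (t₀ + τ))) :
    ∫⁻ s in Set.Ioc t₀ (t₀ + h), metricSlope E (u s) ^ 2 ≤
      ENNReal.ofReal (2 * (E x - proxObjective E h x (u (t₀ + h)))) := by
  have hshift := lintegral_Ioc_add_left (fun s => metricSlope E (u s) ^ 2) t₀ 0 h
  rw [add_zero] at hshift
  exact hshift ▸ lintegral_metricSlope_sq_le (w := fun τ => u (t₀ + τ)) hu hh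

theorem lintegral_metricSlope_sq_Ioc_zero_mul_le {u : ℝ → M} {χ : ℕ → M} (hh : 0 < h)
    (hu : ∀ k : ℕ, ∀ τ ∈ Set.Ioc 0 h, IsProxPoint E τ (χ k) (u (k * h + τ)))
    (hend : ∀ k : ℕ, u (k * h + h) = χ (k + 1)) (N : ℕ) :
    ∫⁻ s in Set.Ioc 0 (N * h), metricSlope E (u s) ^ 2 ≤
      ENNReal.ofReal
        (2 * ∑ k ∈ Finset.range N, (E (χ k) - proxObjective E h (χ k) (χ (k + 1)))) := by
  have hstep : ∀ k, IsProxPoint E h (χ k) (χ (k + 1)) := fun k =>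
    hend k ▸ hu k h ⟨hh, le_rfl⟩
  rw [Finset.mul_sum, ENNReal.ofReal_sum_of_nonneg fun k _ => by
    linarith [(hstep k).proxObjective_le]]
  have hsplit := lintegral_Ioc_le_sum (fun s => metricSlope E (u s) ^ 2) (fun k => k * h) N
  simp only [Nat.cast_zero, zero_mul] at hsplit
  refine hsplit.trans (Finset.sum_le_sum fun k _ => ?_)
  have hk := lintegral_metricSlope_sq_Ioc_add_le hh (hu k)
  rw [hend] at hk
  simpa only [Nat.cast_add, Nat.cast_one, add_mul, one_mul] using hk

end MinimizingMovement

theorem stmt_0 {M : Type*} [MetricSpace M]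
    (E : M → ℝ)
    (h : ℝ) (hh : 0 < h) (χ0 : M) (χ : ℕ → M) (hinit : χ 0 = χ0)
    (u : ℝ → M)
    (humin : ∀ n : ℕ, 1 ≤ n → ∀ t : ℝ, ((n : ℝ) - 1) * h < t → t ≤ (n : ℝ) * h →
      ∀ v : M,
        dist (u t) (χ (n - 1)) ^ 2 / (2 * (t - ((n : ℝ) - 1) * h)) + E (u t) ≤
          dist v (χ (n - 1)) ^ 2 / (2 * (t - ((n : ℝ) - 1) * h)) + E v)
    (huend : ∀ n : ℕ, 1 ≤ n → u ((n : ℝ) * h) = χ n)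
    (N : ℕ) :
    ((E (χ N) : ℝ) : EReal)
      + (((1 / 2) * ∑ n ∈ Finset.Icc 1 N, dist (χ n) (χ (n - 1)) ^ 2 / h : ℝ) : EReal)
      + ((1 / 2 : ℝ) : EReal) *
        ((∫⁻ s in Set.Ioc (0 : ℝ) ((N : ℝ) * h), metricSlope E (u s) ^ 2 : ℝ≥0∞) : EReal)
      ≤ ((E χ0 : ℝ) : EReal) := by
  have hu : ∀ k : ℕ, ∀ τ ∈ Set.Ioc 0 h, IsProxPoint E τ (χ k) (u (k * h + τ)) := by
    rintro k τ ⟨hτ, hτh⟩ v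
    have hk : ((k + 1 : ℕ) : ℝ) - 1 = k := by push_cast; ring
    simpa [proxObjective, hk] using
      humin (k + 1) (by omega) (k * h + τ) (by rw [hk]; linarith) (by push_cast; linarith) v
  have hend : ∀ k : ℕ, u (k * h + h) = χ (k + 1) := fun k => by
    rw [← huend (k + 1) (by omega)]; push_cast; ring_nf
  have hbudget := sum_range_sub_proxObjective E h χ N
  have hbudget_nonneg :
      0 ≤ ∑ k ∈ Finset.range N, (E (χ k) - proxObjective E h (χ k) (χ (k + 1))) :=
    Finset.sum_nonneg fun k _ =>
      sub_nonneg.2 (hend k ▸ (hu k h ⟨hh, le_rfl⟩).proxObjective_le)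
  have hI := lintegral_metricSlope_sq_Ioc_zero_mul_le hh hu hend N
  rw [hbudget, hinit] at hI hbudget_nonneg
  rw [← EReal.coe_add]
  exact EReal.coe_add_half_mul_le (by linarith) hI
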